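/- Under the hypotheses ‖H_2^{-1}‖ ≤ M_1, ‖H_o‖ ≤ M_2, ‖H_d^{-1}‖ ≤ 1/(c - M_2) with c > M_2 + M_1 M_2², the block-inverse error satisfies ‖H^{-1} - [[H_2^{-1}, 0],[0, 0]]‖ ≤ (M_1 M_2 + 1)² / (c - M_2 - M_1 M_2²), where H = [[H_2, H_o^T],[H_o, H_d]]. -/

import Mathlib

/-!
The Schur complement `S = H_d - H_o H_2⁻¹ H_oᵀ` is a perturbation of size at most `M_1 M_2²` of
`H_d`, whose inverse has norm at most `1 / (c - M_2)`; hence `‖S⁻¹‖ ≤ 1 / (c - M_2 - M_1 M_2²)`.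
By the Schur complement formula the error `H⁻¹ - diag(H_2⁻¹, 0)` factors as
`[H_2⁻¹ H_oᵀ; -1] S⁻¹ [H_o H_2⁻¹, -1]`, and both outer factors have norm at most `M_1 M_2 + 1`.
-/

open Matrix
open scoped Matrix.Norms.L2Operator

section PerturbedInverse

variable {R : Type*} [NormedRing R]

theorem isUnit_sub_of_norm_le [CompleteSpace R] {D E : R} (hD : IsUnit D) {a b : ℝ}
    (hDinv : ‖Ring.inverse D‖ ≤ a⁻¹) (hE : ‖E‖ ≤ b) (hba : b < a) : IsUnit (D - E) := by
  have ha : 0 < a := (norm_nonneg E).trans hE |>.trans_lt hba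
  have hsmall : ‖Ring.inverse D * E‖ < 1 :=
    calc ‖Ring.inverse D * E‖ ≤ a⁻¹ * b :=
          (norm_mul_le _ _).trans (mul_le_mul hDinv hE (norm_nonneg _) (inv_nonneg.2 ha.le))
      _ < 1 := by rwa [inv_mul_lt_one₀ ha]
  have hfactor : D - E = D * (1 - Ring.inverse D * E) := by
    rw [mul_sub, mul_one, ← mul_assoc, Ring.mul_inverse_cancel D hD, one_mul]
  rw [hfactor]
  exact hD.mul (isUnit_one_sub_of_norm_lt_one hsmall)

theorem norm_inverse_sub_le {D E : R} (hD : IsUnit D) (hDE : IsUnit (D - E)) {a b : ℝ}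
    (hDinv : ‖Ring.inverse D‖ ≤ a⁻¹) (hE : ‖E‖ ≤ b) (hba : b < a) :
    ‖Ring.inverse (D - E)‖ ≤ (a - b)⁻¹ := by
  set u := Ring.inverse D
  set Y := Ring.inverse (D - E)
  have ha : 0 < a := (norm_nonneg E).trans hE |>.trans_lt hba
  have hY : Y = u + u * E * Y := by
    have hu : u * D = 1 := Ring.inverse_mul_cancel D hD
    have h := congrArg (u * ·) (Ring.mul_inverse_cancel _ hDE)
    simp only [mul_sub, ← mul_assoc, hu, sub_mul, one_mul, mul_one] at h
    exact eq_add_of_sub_eq h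
  have hYle : ‖Y‖ ≤ a⁻¹ * (1 + b * ‖Y‖) :=
    calc ‖Y‖ ≤ ‖u‖ + ‖u‖ * ‖E‖ * ‖Y‖ := by
          conv_lhs => rw [hY]
          refine (norm_add_le _ _).trans (add_le_add_right ?_ _)
          exact (norm_mul_le _ _).trans
            (mul_le_mul_of_nonneg_right (norm_mul_le _ _) (norm_nonneg _))
      _ = ‖u‖ * (1 + ‖E‖ * ‖Y‖) := by ring
      _ ≤ a⁻¹ * (1 + b * ‖Y‖) := by gcongr
  rw [← div_eq_inv_mul, le_div_iff₀ ha] at hYle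
  rw [← one_div, le_div_iff₀ (sub_pos.2 hba)]
  linarith

end PerturbedInverse

namespace Matrix

theorem inv_fromBlocks_sub_fromBlocks_inv_zero {α m n : Type*} [CommRing α] [Fintype m]
    [Fintype n] [DecidableEq m] [DecidableEq n] (A : Matrix m m α) (B : Matrix m n α)
    (C : Matrix n m α) (D : Matrix n n α) (hA : IsUnit A) (hS : IsUnit (D - C * A⁻¹ * B)) :
    (fromBlocks A B C D)⁻¹ - fromBlocks A⁻¹ 0 0 0 =
      fromRows (A⁻¹ * B) (-1) * (D - C * A⁻¹ * B)⁻¹ * fromCols (C * A⁻¹) (-1) := by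
  let := hA.invertible
  let : Invertible (D - C * ⅟A * B) := by rw [invOf_eq_nonsing_inv]; exact hS.invertible
  let := fromBlocks₁₁Invertible A B C D
  rw [← invOf_eq_nonsing_inv (fromBlocks A B C D), invOf_fromBlocks₁₁_eq, fromRows_mul,
    fromRows_mul_fromCols]
  simp only [invOf_eq_nonsing_inv]
  ext (i | i) (j | j) <;> simp [Matrix.mul_assoc]

section L2OpNorm

variable {𝕜 : Type*} [RCLike 𝕜] {l m n m₁ m₂ n₁ n₂ : Type*} [Fintype l] [Fintype m] [Fintype n]
  [Fintype m₁] [Fintype m₂] [Fintype n₁] [Fintype n₂]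

theorem l2_opNorm_one_le [DecidableEq n] : ‖(1 : Matrix n n 𝕜)‖ ≤ 1 := by
  rw [cstar_norm_def, map_one, ContinuousLinearMap.one_def]
  exact ContinuousLinearMap.norm_id_le

theorem l2_opNorm_mul_mul_le [DecidableEq n] [DecidableEq l] [DecidableEq m₁]
    (A : Matrix m n 𝕜) (B : Matrix n l 𝕜) (C : Matrix l m₁ 𝕜) :
    ‖A * B * C‖ ≤ ‖A‖ * ‖B‖ * ‖C‖ :=
  (l2_opNorm_mul _ _).trans (mul_le_mul_of_nonneg_right (l2_opNorm_mul _ _) (norm_nonneg _))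

theorem _root_.EuclideanSpace.norm_equiv_symm_star (v : n → 𝕜) :
    ‖(EuclideanSpace.equiv n 𝕜).symm (star v)‖ = ‖(EuclideanSpace.equiv n 𝕜).symm v‖ := by
  simp [EuclideanSpace.norm_eq]

theorem l2_opNorm_map_star_le [DecidableEq n] (A : Matrix m n 𝕜) : ‖A.map star‖ ≤ ‖A‖ := by
  rw [l2_opNorm_def]
  refine ContinuousLinearMap.opNorm_le_bound _ (norm_nonneg A) fun x => ?_
  set y := (EuclideanSpace.equiv n 𝕜).symm (star (EuclideanSpace.equiv n 𝕜 x))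
  have hmulVec : A.map star *ᵥ (EuclideanSpace.equiv n 𝕜 x) = star (A *ᵥ y) := by
    ext i
    simp [y, mulVec, dotProduct, star_sum, mul_comm]
  calc ‖(EuclideanSpace.equiv m 𝕜).symm (A.map star *ᵥ EuclideanSpace.equiv n 𝕜 x)‖
      = ‖(EuclideanSpace.equiv m 𝕜).symm (A *ᵥ y)‖ := by
        rw [hmulVec, EuclideanSpace.norm_equiv_symm_star]
    _ ≤ ‖A‖ * ‖y‖ := A.l2_opNorm_mulVec y
    _ = ‖A‖ * ‖x‖ := by rw [EuclideanSpace.norm_equiv_symm_star]; rfl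

theorem l2_opNorm_transpose_le [DecidableEq m] [DecidableEq n] (A : Matrix m n 𝕜) :
    ‖Aᵀ‖ ≤ ‖A‖ := by
  have hA : Aᵀ = (A.map star)ᴴ := by ext; simp
  rw [hA, l2_opNorm_conjTranspose]
  exact l2_opNorm_map_star_le A

theorem l2_opNorm_fromRows_le [DecidableEq n] (A₁ : Matrix m₁ n 𝕜) (A₂ : Matrix m₂ n 𝕜) :
    ‖fromRows A₁ A₂‖ ≤ ‖A₁‖ + ‖A₂‖ := by
  have hsq : ‖fromRows A₁ A₂‖ * ‖fromRows A₁ A₂‖ ≤ (‖A₁‖ + ‖A₂‖) * (‖A₁‖ + ‖A₂‖) :=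
    calc ‖fromRows A₁ A₂‖ * ‖fromRows A₁ A₂‖ = ‖A₁ᴴ * A₁ + A₂ᴴ * A₂‖ := by
          rw [← l2_opNorm_conjTranspose_mul_self, conjTranspose_fromRows_eq_fromCols_conjTranspose,
            fromCols_mul_fromRows]
      _ ≤ ‖A₁‖ * ‖A₁‖ + ‖A₂‖ * ‖A₂‖ := by
          simpa only [l2_opNorm_conjTranspose_mul_self] using norm_add_le (A₁ᴴ * A₁) (A₂ᴴ * A₂)
      _ ≤ (‖A₁‖ + ‖A₂‖) * (‖A₁‖ + ‖A₂‖) := by nlinarith [norm_nonneg A₁, norm_nonneg A₂]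
  exact (mul_self_le_mul_self_iff (norm_nonneg _) (by positivity)).2 hsq

theorem l2_opNorm_fromCols_le [DecidableEq m] [DecidableEq n₁] [DecidableEq n₂]
    (A₁ : Matrix m n₁ 𝕜) (A₂ : Matrix m n₂ 𝕜) : ‖fromCols A₁ A₂‖ ≤ ‖A₁‖ + ‖A₂‖ := by
  rw [← l2_opNorm_conjTranspose, conjTranspose_fromCols_eq_fromRows_conjTranspose,
    ← l2_opNorm_conjTranspose A₁, ← l2_opNorm_conjTranspose A₂]
  exact l2_opNorm_fromRows_le _ _

theorem l2_opNorm_fromRows_neg_one_le [DecidableEq n] (A : Matrix m n 𝕜) :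
    ‖fromRows A (-1 : Matrix n n 𝕜)‖ ≤ ‖A‖ + 1 :=
  (l2_opNorm_fromRows_le _ _).trans (by rw [norm_neg]; gcongr; exact l2_opNorm_one_le)

theorem l2_opNorm_fromCols_neg_one_le [DecidableEq m] [DecidableEq n] (A : Matrix m n 𝕜) :
    ‖fromCols A (-1 : Matrix m m 𝕜)‖ ≤ ‖A‖ + 1 :=
  (l2_opNorm_fromCols_le _ _).trans (by rw [norm_neg]; gcongr; exact l2_opNorm_one_le)

end L2OpNorm

end Matrix

theorem stmt10_general (m k : ℕ) (H2 : Matrix (Fin m) (Fin m) ℂ) (Ho : Matrix (Fin k) (Fin m) ℂ)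
    (Hd : Matrix (Fin k) (Fin k) ℂ) (M1 M2 c : ℝ)
    (hc : M2 + M1 * M2 ^ 2 < c) (hH2 : IsUnit H2) (hHd : IsUnit Hd)
    (h1 : ‖H2⁻¹‖ ≤ M1) (h2 : ‖Ho‖ ≤ M2) (h3 : ‖Hd⁻¹‖ ≤ 1 / (c - M2)) :
    ‖(Matrix.fromBlocks H2 Hoᵀ Ho Hd)⁻¹ - Matrix.fromBlocks H2⁻¹ 0 0 0‖ ≤
      (M1 * M2 + 1) ^ 2 / (c - M2 - M1 * M2 ^ 2) := by
  have hM1 : 0 ≤ M1 := (norm_nonneg _).trans h1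
  have hM2 : 0 ≤ M2 := (norm_nonneg _).trans h2
  have hHoT : ‖Hoᵀ‖ ≤ M2 := (l2_opNorm_transpose_le Ho).trans h2
  have hE : ‖Ho * H2⁻¹ * Hoᵀ‖ ≤ M1 * M2 ^ 2 := by
    calc ‖Ho * H2⁻¹ * Hoᵀ‖ ≤ M2 * M1 * M2 :=
          (l2_opNorm_mul_mul_le _ _ _).trans (by gcongr)
      _ = M1 * M2 ^ 2 := by ring
  have hHdinv : ‖Ring.inverse Hd‖ ≤ (c - M2)⁻¹ := by
    rwa [← nonsing_inv_eq_ringInverse, inv_eq_one_div (c - M2)]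
  have hlt : M1 * M2 ^ 2 < c - M2 := by linarith
  have hS := isUnit_sub_of_norm_le hHd hHdinv hE hlt
  have hSinv : ‖(Hd - Ho * H2⁻¹ * Hoᵀ)⁻¹‖ ≤ (c - M2 - M1 * M2 ^ 2)⁻¹ := by
    rw [nonsing_inv_eq_ringInverse]
    exact norm_inverse_sub_le hHd hS hHdinv hE hlt
  rw [inv_fromBlocks_sub_fromBlocks_inv_zero _ _ _ _ hH2 hS]
  calc _ ≤ (‖H2⁻¹‖ * ‖Hoᵀ‖ + 1) * (c - M2 - M1 * M2 ^ 2)⁻¹ * (‖Ho‖ * ‖H2⁻¹‖ + 1) := by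
        refine (l2_opNorm_mul_mul_le _ _ _).trans ?_
        gcongr
        · exact (l2_opNorm_fromRows_neg_one_le _).trans (by gcongr; exact l2_opNorm_mul _ _)
        · exact (l2_opNorm_fromCols_neg_one_le _).trans (by gcongr; exact l2_opNorm_mul _ _)
    _ ≤ (M1 * M2 + 1) * (c - M2 - M1 * M2 ^ 2)⁻¹ * (M2 * M1 + 1) := by gcongr
    _ = (M1 * M2 + 1) ^ 2 / (c - M2 - M1 * M2 ^ 2) := by ring

theorem stmt10 (m k : ℕ) (H2 : Matrix (Fin m) (Fin m) ℂ) (Ho : Matrix (Fin k) (Fin m) ℂ)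
    (Hd : Matrix (Fin k) (Fin k) ℂ) (M1 M2 c : ℝ) (hM1 : 0 < M1) (hM2 : 0 < M2)
    (hc : M2 + M1 * M2 ^ 2 < c) (hH2 : IsUnit H2) (hHd : IsUnit Hd)
    (h1 : ‖H2⁻¹‖ ≤ M1) (h2 : ‖Ho‖ ≤ M2) (h3 : ‖Hd⁻¹‖ ≤ 1 / (c - M2)) :
    ‖(Matrix.fromBlocks H2 Hoᵀ Ho Hd)⁻¹ - Matrix.fromBlocks H2⁻¹ 0 0 0‖ ≤
      (M1 * M2 + 1) ^ 2 / (c - M2 - M1 * M2 ^ 2) :=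
  stmt10_general m k H2 Ho Hd M1 M2 c hc hH2 hHd h1 h2 h3
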